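/- Let γ : ℝ → ℝ³ be a unit speed spherical curve with constant nonzero geodesic curvature k_g, let b ≠ 0, a ∈ ℝ³, and let k : ℝ → ℝ be C¹ with antiderivative K. For the curve c with c'(s) = b e^{K(s)} γ(s), the spherical condition (1/ν)·[(1/(ν τ))·(1/κ)']' + τ/κ = 0 (where ν, κ, τ are the speed, curvature and torsion of c) is equivalent to the Riccati equation k'(s) + k(s)² = −k_g² for all s. -/

import Mathlib

noncomputable section

/-- ℝ³ as a Euclidean space. -/
abbrev E3 : Type := EuclideanSpace ℝ (Fin 3)

/-- The cross product on ℝ³. -/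
def cross3 (u v : E3) : E3 :=
  (WithLp.equiv 2 (Fin 3 → ℝ)).symm
    (crossProduct ((WithLp.equiv 2 (Fin 3 → ℝ)) u) ((WithLp.equiv 2 (Fin 3 → ℝ)) v))

/-- The (real) inner product on ℝ³. -/
def inner3 (u v : E3) : ℝ := inner ℝ u v

/-- The speed ν of a curve. -/
def speed (c : ℝ → E3) (s : ℝ) : ℝ := ‖deriv c s‖

/-- The curvature κ of a curve. -/
def curvature (c : ℝ → E3) (s : ℝ) : ℝ :=
  ‖cross3 (deriv c s) (deriv (deriv c) s)‖ / ‖deriv c s‖ ^ 3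

/-- The torsion τ of a curve. -/
def torsion (c : ℝ → E3) (s : ℝ) : ℝ :=
  inner3 (cross3 (deriv c s) (deriv (deriv c) s)) (deriv (deriv (deriv c)) s) /
    ‖cross3 (deriv c s) (deriv (deriv c) s)‖ ^ 2

/-- σ(s) = (κ²/(ν (κ² + τ²)^{3/2}))·(τ/κ)'(s), the geodesic curvature of the spherical
image of the principal normal indicatrix. -/
def sigmaOf (c : ℝ → E3) (s : ℝ) : ℝ :=
  (curvature c s) ^ 2 / (speed c s * ((curvature c s) ^ 2 + (torsion c s) ^ 2) ^ ((3 : ℝ) / 2)) *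
    deriv (fun t => torsion c t / curvature c t) s

/-- The geodesic curvature k_g(s) = det(γ(s), γ'(s), γ''(s)) = ⟨γ(s) × γ'(s), γ''(s)⟩ of a
unit speed spherical curve γ. -/
def kgOf (γ : ℝ → E3) (s : ℝ) : ℝ :=
  inner3 (cross3 (γ s) (deriv γ s)) (deriv (deriv γ) s)

/-- Build a vector in ℝ³ from coordinates. -/
def mk3 (x y z : ℝ) : E3 := (WithLp.equiv 2 (Fin 3 → ℝ)).symm ![x, y, z]

end

open Matrix

lemma inner3_eq_dot (u v : E3) :
    inner3 u v = (WithLp.equiv 2 (Fin 3 → ℝ) u) ⬝ᵥ (WithLp.equiv 2 (Fin 3 → ℝ) v) := by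
  simp [inner3, dotProduct, PiLp.inner_apply, RCLike.inner_apply, mul_comm]

lemma cross3_smul_left (x : ℝ) (u v : E3) : cross3 (x • u) v = x • cross3 u v := by
  simp [cross3, _root_.map_smul]

lemma cross3_smul_right (x : ℝ) (u v : E3) : cross3 u (x • v) = x • cross3 u v := by
  simp [cross3, _root_.map_smul]

lemma cross3_add_right (u v w : E3) : cross3 u (v + w) = cross3 u v + cross3 u w := by
  simp [cross3, map_add]

lemma cross3_self (u : E3) : cross3 u u = 0 := by
  simp [cross3, cross_self]

lemma norm_sq_eq_inner3 (u : E3) : ‖u‖ ^ 2 = inner3 u u := by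
  rw [inner3, real_inner_self_eq_norm_sq]

lemma norm_cross3_sq (u v : E3) :
    ‖cross3 u v‖ ^ 2 = ‖u‖ ^ 2 * ‖v‖ ^ 2 - inner3 u v ^ 2 := by
  rw [norm_sq_eq_inner3, norm_sq_eq_inner3, norm_sq_eq_inner3, inner3_eq_dot, inner3_eq_dot,
    inner3_eq_dot, inner3_eq_dot]
  simp only [cross3, Equiv.apply_symm_apply]
  rw [cross_dot_cross, dotProduct_comm ((WithLp.equiv 2 (Fin 3 → ℝ)) v)
    ((WithLp.equiv 2 (Fin 3 → ℝ)) u)]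
  ring

lemma inner3_cross3_self_left (u v : E3) : inner3 (cross3 u v) u = 0 := by
  rw [inner3_eq_dot]
  simp only [cross3, Equiv.apply_symm_apply]
  rw [dotProduct_comm]
  exact dot_self_cross _ _

lemma inner3_cross3_self_right (u v : E3) : inner3 (cross3 u v) v = 0 := by
  rw [inner3_eq_dot]
  simp only [cross3, Equiv.apply_symm_apply]
  rw [dotProduct_comm]
  exact dot_cross_self _ _

lemma inner3_add_right (u v w : E3) : inner3 u (v + w) = inner3 u v + inner3 u w :=
  inner_add_right _ _ _

lemma inner3_smul_right (x : ℝ) (u v : E3) : inner3 u (x • v) = x * inner3 u v :=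
  real_inner_smul_right _ _ _

lemma inner3_smul_left (x : ℝ) (u v : E3) : inner3 (x • u) v = x * inner3 u v :=
  real_inner_smul_left _ _ _

/-- For c with c' = b e^K γ over a circle γ of constant nonzero geodesic
curvature k_g, the spherical condition (1/ν)[(1/(ντ))(1/κ)']' + τ/κ = 0 is equivalent to the
Riccati equation k' + k² = −k_g². -/
theorem spherical_condition_iff_riccati
    (γ : ℝ → E3) (hγ : ContDiff ℝ (⊤ : ℕ∞) γ)
    (hsph : ∀ s, ‖γ s‖ = 1) (hunit : ∀ s, ‖deriv γ s‖ = 1)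
    (kg : ℝ) (hkg : kg ≠ 0) (hkgconst : ∀ s, kgOf γ s = kg)
    (b : ℝ) (hb : b ≠ 0)
    (k K : ℝ → ℝ) (hk : ContDiff ℝ 1 k) (hK : ∀ s, HasDerivAt K (k s) s)
    (c : ℝ → E3) (hc : ∀ s, HasDerivAt c ((b * Real.exp (K s)) • γ s) s) :
    (∀ s : ℝ, (1 / speed c s) *
        deriv (fun t => (1 / (speed c t * torsion c t)) * deriv (fun u => 1 / curvature c u) t) s
        + torsion c s / curvature c s = 0) ↔
      (∀ s : ℝ, deriv k s + (k s) ^ 2 = -kg ^ 2) := by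
  have hbabs : |b| ≠ 0 := abs_ne_zero.mpr hb
  have hγ1 : ContDiff ℝ ((⊤ : ℕ∞) : WithTop ℕ∞) (deriv γ) := (contDiff_infty_iff_deriv.mp (hγ.of_le (by simp))).2
  have hγd : ∀ s, HasDerivAt γ (deriv γ s) s := fun s => (hγ.differentiable (by simp) s).hasDerivAt
  have hγd2 : ∀ s, HasDerivAt (deriv γ) (deriv (deriv γ) s) s :=
    fun s => (hγ1.differentiable (by simp) s).hasDerivAt
  have hkd : ∀ s, HasDerivAt k (deriv k s) s := fun s => (hk.differentiable one_ne_zero s).hasDerivAt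
  set φ : ℝ → ℝ := fun s => b * Real.exp (K s) with hφdef
  have hφ : ∀ s, HasDerivAt φ (φ s * k s) s := by
    intro s
    simpa [hφdef, mul_assoc] using ((hK s).exp).const_mul b
  -- derivatives of c
  have hc1 : deriv c = fun s => φ s • γ s := funext fun s => (hc s).deriv
  have hc2 : deriv (deriv c) = fun s => (φ s * k s) • γ s + φ s • deriv γ s := by
    rw [hc1]
    funext s
    rw [(show HasDerivAt (fun s => φ s • γ s) _ s from (hφ s).smul (hγd s)).deriv]
    module
  have hc3 : deriv (deriv (deriv c)) = fun s =>
      ((φ s * k s * k s + φ s * deriv k s) • γ s + (φ s * k s) • deriv γ s) +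
        ((φ s * k s) • deriv γ s + φ s • deriv (deriv γ) s) := by
    rw [hc2]
    funext s
    rw [(show HasDerivAt (fun s => (φ s * k s) • γ s + φ s • deriv γ s) _ s from
      (((hφ s).mul (hkd s)).smul (hγd s)).add ((hφ s).smul (hγd2 s))).deriv]
    simp only [Pi.mul_apply]
    module
  -- inner product facts
  have hgg : ∀ s, inner3 (γ s) (γ s) = 1 := fun s => by
    rw [inner3, real_inner_self_eq_norm_sq, hsph, one_pow]
  have hdd : ∀ s, inner3 (deriv γ s) (deriv γ s) = 1 := fun s => by
    rw [inner3, real_inner_self_eq_norm_sq, hunit, one_pow]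
  have hgd : ∀ s, inner3 (γ s) (deriv γ s) = 0 := by
    intro s
    have h1 := HasDerivAt.inner ℝ (hγd s) (hγd s)
    have h2 : (fun t => (inner ℝ (γ t) (γ t) : ℝ)) = fun _ => (1 : ℝ) := funext fun t => hgg t
    rw [h2] at h1
    have h0 : (inner ℝ (γ s) (deriv γ s) : ℝ) + inner ℝ (deriv γ s) (γ s) = 0 := by
      have := h1.deriv
      rw [deriv_const] at this
      linarith [this.symm]
    have hcomm : (inner ℝ (deriv γ s) (γ s) : ℝ) = inner ℝ (γ s) (deriv γ s) := real_inner_comm _ _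
    rw [inner3]
    linarith [h0, hcomm]
  -- cross product of c' and c''
  have hcr : ∀ s, cross3 (deriv c s) (deriv (deriv c) s)
      = (φ s * φ s) • cross3 (γ s) (deriv γ s) := by
    intro s
    rw [congrFun hc2 s, congrFun hc1 s]
    simp only [cross3_add_right, cross3_smul_left, cross3_smul_right, cross3_self,
      smul_zero, zero_add, smul_smul]
  have hnc : ∀ s, ‖cross3 (γ s) (deriv γ s)‖ = 1 := by
    intro s
    have h := norm_cross3_sq (γ s) (deriv γ s)
    rw [hsph s, hunit s, hgd s] at h
    nlinarith [norm_nonneg (cross3 (γ s) (deriv γ s))]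
  have hφabs : ∀ s, |φ s| = |b| * Real.exp (K s) := by
    intro s
    rw [hφdef, abs_mul, abs_of_pos (Real.exp_pos _)]
  -- speed, curvature, torsion
  have hspeed : ∀ s, speed c s = |b| * Real.exp (K s) := by
    intro s
    rw [speed, congrFun hc1 s, norm_smul, hsph, mul_one, Real.norm_eq_abs, hφabs]
  have hcurv : ∀ s, curvature c s = 1 / (|b| * Real.exp (K s)) := by
    intro s
    rw [curvature, hcr s, norm_smul, hnc s, mul_one, congrFun hc1 s, norm_smul, hsph, mul_one,
      Real.norm_eq_abs, Real.norm_eq_abs, abs_mul_self, hφabs, hφdef]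
    have h1 : (0:ℝ) < |b| * Real.exp (K s) := by positivity
    field_simp
    have hbb : b * b = |b| * |b| := (abs_mul_abs_self b).symm
    linear_combination hbb
  have htor : ∀ s, torsion c s = kg / (b * Real.exp (K s)) := by
    intro s
    have hkgs : inner3 (cross3 (γ s) (deriv γ s)) (deriv (deriv γ) s) = kg := hkgconst s
    rw [torsion, congrFun hc3 s, hcr s]
    simp only [inner3_add_right, inner3_smul_right, inner3_smul_left, inner3_cross3_self_left,
      inner3_cross3_self_right, hkgs, mul_zero, zero_add, add_zero, mul_one]
    rw [norm_smul, hnc s, mul_one, Real.norm_eq_abs, abs_mul_self, hφdef]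
    have h2 : b * Real.exp (K s) ≠ 0 := mul_ne_zero hb (Real.exp_ne_zero _)
    field_simp
  -- the inner derivative function
  have hA : (fun u => 1 / curvature c u) = fun u => |b| * Real.exp (K u) := by
    funext u
    rw [hcurv u, one_div_one_div]
  have hGfun : (fun t => (1 / (speed c t * torsion c t)) * deriv (fun u => 1 / curvature c u) t)
      = fun t => (b / kg) * (Real.exp (K t) * k t) := by
    funext t
    rw [hA, (((hK t).exp).const_mul |b|).deriv, hspeed t, htor t]
    have h2 : b * Real.exp (K t) ≠ 0 := mul_ne_zero hb (Real.exp_ne_zero _)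
    have h3 : Real.exp (K t) ≠ 0 := Real.exp_ne_zero _
    field_simp
  -- the main formula
  have hmain : ∀ s, (1 / speed c s) *
      deriv (fun t => (1 / (speed c t * torsion c t)) * deriv (fun u => 1 / curvature c u) t) s
      + torsion c s / curvature c s
      = (b / |b|) * ((deriv k s + k s ^ 2 + kg ^ 2) / kg) := by
    intro s
    rw [hGfun, (show HasDerivAt (fun t => b / kg * (Real.exp (K t) * k t)) _ s from
      (((hK s).exp).mul (hkd s)).const_mul (b / kg)).deriv, hspeed s, htor s, hcurv s]
    have h3 : Real.exp (K s) ≠ 0 := Real.exp_ne_zero _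
    rcases hb.lt_or_gt with hbneg | hbpos
    · rw [abs_of_neg hbneg]
      field_simp
      ring
    · rw [abs_of_pos hbpos]
      field_simp
      ring
  constructor
  · intro h s
    have h0 := h s
    rw [hmain s] at h0
    have hb2 : b / |b| ≠ 0 := div_ne_zero hb hbabs
    have h1 := (mul_eq_zero.mp h0).resolve_left hb2
    have h2 := (div_eq_zero_iff.mp h1).resolve_right hkg
    linarith
  · intro h s
    rw [hmain s, h s]
    ring
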